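/- Let d ≥ 1, L > 0, ε₀ > 0, and let R be the DJW18 randomizer with parameters (d, L, ε₀). Then R satisfies ε₀-local differential privacy on the ℓ₂-ball of radius L: for all x, x′ ∈ ℝ^d with ‖x‖₂ ≤ L and ‖x′‖₂ ≤ L and every measurable set S ⊆ ℝ^d, Pr[R(x) ∈ S] ≤ e^{ε₀} · Pr[R(x′) ∈ S]. -/

import Mathlib

open MeasureTheory

/-- `sign(t) = 1` if `t ≥ 0` and `−1` if `t < 0`. -/
noncomputable def sgn (t : ℝ) : ℝ := if t < 0 then -1 else 1

open Classical in
/-- The unit direction of `x` (with the fixed unit vector `u` used for `x = 0`). -/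
noncomputable def unitDir {d : ℕ} (u x : EuclideanSpace ℝ (Fin d)) :
    EuclideanSpace ℝ (Fin d) :=
  if x = 0 then u else ‖x‖⁻¹ • x

/-- The normalization constant `M = L·(√π/2)·(d·Γ((d+1)/2)/Γ(d/2 + 1))·((e^{ε₀}+1)/(e^{ε₀}−1))`
of the DJW18 randomizer. -/
noncomputable def djwM (d : ℕ) (L ε₀ : ℝ) : ℝ :=
  L * (Real.sqrt Real.pi / 2) *
    ((d : ℝ) * Real.Gamma (((d : ℝ) + 1) / 2) / Real.Gamma ((d : ℝ) / 2 + 1)) *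
    ((Real.exp ε₀ + 1) / (Real.exp ε₀ - 1))

/-- `σ` is the uniform probability measure on the unit sphere `S^{d−1} ⊂ ℝ^d`:
a probability measure concentrated on the unit sphere and invariant under every
linear isometry (rotation/reflection) of `ℝ^d`. -/
def IsUniformSphereMeasure {d : ℕ} (σ : Measure (EuclideanSpace ℝ (Fin d))) : Prop :=
  IsProbabilityMeasure σ ∧ (∀ᵐ v ∂σ, ‖v‖ = 1) ∧
    ∀ f : EuclideanSpace ℝ (Fin d) ≃ₗᵢ[ℝ] EuclideanSpace ℝ (Fin d), σ.map f = σ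

/-- The distribution of the output of the DJW18 randomizer with parameters
`(d, L, ε₀)` on input `x`: (i) `x̄ = ±L·x/‖x‖` with probabilities
`1/2 + ‖x‖/(2L)` and `1/2 − ‖x‖/(2L)`; (ii) `v` uniform on the unit sphere,
flipped so that `⟨v, x̄⟩ ≥ 0`; (iii) `U` Bernoulli with `Pr[U = 1] = e^{ε₀}/(e^{ε₀}+1)`;
(iv) output `(2U−1)·M·v`. Here `σ` is the uniform sphere measure and `u` the fixed
unit vector used in place of `x/‖x‖` for `x = 0`. -/
noncomputable def djw18 (d : ℕ) (L ε₀ : ℝ) (u : EuclideanSpace ℝ (Fin d))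
    (σ : Measure (EuclideanSpace ℝ (Fin d))) (x : EuclideanSpace ℝ (Fin d)) :
    Measure (EuclideanSpace ℝ (Fin d)) :=
  let M := djwM d L ε₀
  let pU := Real.exp ε₀ / (Real.exp ε₀ + 1)
  let pS := 1 / 2 + ‖x‖ / (2 * L)
  let out : ℝ → ℝ → EuclideanSpace ℝ (Fin d) → EuclideanSpace ℝ (Fin d) :=
    fun s c v => (c * M * sgn (s * (inner ℝ v (unitDir u x) : ℝ))) • v
  ENNReal.ofReal pS •
      (ENNReal.ofReal pU • σ.map (out 1 1) + ENNReal.ofReal (1 - pU) • σ.map (out 1 (-1))) +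
    ENNReal.ofReal (1 - pS) •
      (ENNReal.ofReal pU • σ.map (out (-1) 1) +
        ENNReal.ofReal (1 - pU) • σ.map (out (-1) (-1)))

noncomputable def djwOut {d : ℕ} (M : ℝ) (w : EuclideanSpace ℝ (Fin d)) (s c : ℝ)
    (v : EuclideanSpace ℝ (Fin d)) : EuclideanSpace ℝ (Fin d) :=
  (c * M * sgn (s * (inner ℝ v w : ℝ))) • v

lemma measurable_sgn : Measurable sgn := by
  unfold sgn
  exact Measurable.ite (measurableSet_lt measurable_id measurable_const)
    measurable_const measurable_const

lemma measurable_djwOut {d : ℕ} (M : ℝ) (w : EuclideanSpace ℝ (Fin d)) (s c : ℝ) :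
    Measurable (djwOut M w s c) := by
  unfold djwOut
  exact (((measurable_sgn.comp
    ((Continuous.inner continuous_id continuous_const).measurable.const_mul s)).const_mul
      (c * M))).smul measurable_id

lemma comp_neg_1 {d : ℕ} (M : ℝ) (w : EuclideanSpace ℝ (Fin d)) :
    (djwOut M w 1 (-1)) ∘ (fun v => -v) = djwOut M w (-1) 1 := by
  funext v
  simp only [Function.comp_apply, djwOut, inner_neg_left, one_mul, neg_one_mul, neg_mul,
    neg_smul, smul_neg, neg_neg]

lemma comp_neg_2 {d : ℕ} (M : ℝ) (w : EuclideanSpace ℝ (Fin d)) :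
    (djwOut M w 1 1) ∘ (fun v => -v) = djwOut M w (-1) (-1) := by
  funext v
  simp only [Function.comp_apply, djwOut, inner_neg_left, one_mul, neg_one_mul, neg_mul,
    neg_smul, smul_neg, neg_neg]

section Maps

variable {d : ℕ} (σ : Measure (EuclideanSpace ℝ (Fin d)))
  (hneg : σ.map (fun v => -v) = σ) (M : ℝ) (w : EuclideanSpace ℝ (Fin d))

lemma measurable_neg' : Measurable (fun v : EuclideanSpace ℝ (Fin d) => -v) :=
  measurable_neg

include hneg in
lemma map_neg_swap_1 : σ.map (djwOut M w (-1) 1) = σ.map (djwOut M w 1 (-1)) := by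
  rw [← comp_neg_1, ← Measure.map_map (measurable_djwOut M w 1 (-1)) measurable_neg', hneg]

include hneg in
lemma map_neg_swap_2 : σ.map (djwOut M w (-1) (-1)) = σ.map (djwOut M w 1 1) := by
  rw [← comp_neg_2, ← Measure.map_map (measurable_djwOut M w 1 1) measurable_neg', hneg]

include hneg in
lemma map_sum_eq (S : Set (EuclideanSpace ℝ (Fin d))) (hS : MeasurableSet S) :
    σ.map (djwOut M w 1 1) S + σ.map (djwOut M w 1 (-1)) S
      = 2 * σ ((fun v => M • v) ⁻¹' S) := by
  set g : EuclideanSpace ℝ (Fin d) → EuclideanSpace ℝ (Fin d) := fun v => M • v with hg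
  set h : EuclideanSpace ℝ (Fin d) → EuclideanSpace ℝ (Fin d) := fun v => (-M) • v with hh
  have hgm : Measurable g := measurable_id.const_smul M
  have hhm : Measurable h := measurable_id.const_smul (-M)
  set P : Set (EuclideanSpace ℝ (Fin d)) := {v | (inner ℝ v w : ℝ) < 0} with hPdef
  have hP : MeasurableSet P :=
    measurableSet_lt (Continuous.inner continuous_id continuous_const).measurable
      measurable_const
  have e1 : djwOut M w 1 1 ⁻¹' S ∩ P = h ⁻¹' S ∩ P := by
    ext v
    simp only [Set.mem_inter_iff, Set.mem_preimage, Set.mem_setOf_eq, djwOut, sgn, one_mul,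
      hPdef, hh]
    constructor
    · rintro ⟨h1, h2⟩
      rw [if_pos h2] at h1
      refine ⟨?_, h2⟩
      convert h1 using 2
      ring
    · rintro ⟨h1, h2⟩
      rw [if_pos h2]
      refine ⟨?_, h2⟩
      convert h1 using 2
      ring
  have e2 : djwOut M w 1 1 ⁻¹' S \ P = g ⁻¹' S \ P := by
    ext v
    simp only [Set.mem_diff, Set.mem_preimage, Set.mem_setOf_eq, djwOut, sgn, one_mul,
      hPdef, hg]
    constructor
    · rintro ⟨h1, h2⟩
      rw [if_neg h2] at h1
      refine ⟨?_, h2⟩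
      convert h1 using 2
      ring
    · rintro ⟨h1, h2⟩
      rw [if_neg h2]
      refine ⟨?_, h2⟩
      convert h1 using 2
      ring
  have e3 : djwOut M w 1 (-1) ⁻¹' S ∩ P = g ⁻¹' S ∩ P := by
    ext v
    simp only [Set.mem_inter_iff, Set.mem_preimage, Set.mem_setOf_eq, djwOut, sgn, one_mul,
      hPdef, hg]
    constructor
    · rintro ⟨h1, h2⟩
      rw [if_pos h2] at h1
      refine ⟨?_, h2⟩
      convert h1 using 2
      ring
    · rintro ⟨h1, h2⟩
      rw [if_pos h2]
      refine ⟨?_, h2⟩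
      convert h1 using 2
      ring
  have e4 : djwOut M w 1 (-1) ⁻¹' S \ P = h ⁻¹' S \ P := by
    ext v
    simp only [Set.mem_diff, Set.mem_preimage, Set.mem_setOf_eq, djwOut, sgn, one_mul,
      hPdef, hh]
    constructor
    · rintro ⟨h1, h2⟩
      rw [if_neg h2] at h1
      refine ⟨?_, h2⟩
      convert h1 using 2
      ring
    · rintro ⟨h1, h2⟩
      rw [if_neg h2]
      refine ⟨?_, h2⟩
      convert h1 using 2
      ring
  have hgh : σ (h ⁻¹' S) = σ (g ⁻¹' S) := by
    have : h ⁻¹' S = (fun v : EuclideanSpace ℝ (Fin d) => -v) ⁻¹' (g ⁻¹' S) := by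
      ext v
      simp [hg, hh, smul_neg, neg_smul]
    rw [this, ← Measure.map_apply measurable_neg' (hgm hS), hneg]
  rw [Measure.map_apply (measurable_djwOut M w 1 1) hS,
    Measure.map_apply (measurable_djwOut M w 1 (-1)) hS,
    ← measure_inter_add_diff (djwOut M w 1 1 ⁻¹' S) hP,
    ← measure_inter_add_diff (djwOut M w 1 (-1) ⁻¹' S) hP,
    e1, e2, e3, e4]
  have r1 : σ (g ⁻¹' S ∩ P) + σ (g ⁻¹' S \ P) = σ (g ⁻¹' S) := measure_inter_add_diff _ hP
  have r2 : σ (h ⁻¹' S ∩ P) + σ (h ⁻¹' S \ P) = σ (h ⁻¹' S) := measure_inter_add_diff _ hP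
  calc σ (h ⁻¹' S ∩ P) + σ (g ⁻¹' S \ P) + (σ (g ⁻¹' S ∩ P) + σ (h ⁻¹' S \ P))
      = (σ (g ⁻¹' S ∩ P) + σ (g ⁻¹' S \ P)) + (σ (h ⁻¹' S ∩ P) + σ (h ⁻¹' S \ P)) := by ring
    _ = 2 * σ (g ⁻¹' S) := by rw [r1, r2, hgh]; ring

end Maps

lemma djw18_eq (d : ℕ) (L ε₀ : ℝ) (u : EuclideanSpace ℝ (Fin d))
    (σ : Measure (EuclideanSpace ℝ (Fin d))) (x : EuclideanSpace ℝ (Fin d)) :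
    djw18 d L ε₀ u σ x =
      ENNReal.ofReal (1 / 2 + ‖x‖ / (2 * L)) •
          (ENNReal.ofReal (Real.exp ε₀ / (Real.exp ε₀ + 1)) •
              σ.map (djwOut (djwM d L ε₀) (unitDir u x) 1 1) +
            ENNReal.ofReal (1 - Real.exp ε₀ / (Real.exp ε₀ + 1)) •
              σ.map (djwOut (djwM d L ε₀) (unitDir u x) 1 (-1))) +
        ENNReal.ofReal (1 - (1 / 2 + ‖x‖ / (2 * L))) •
          (ENNReal.ofReal (Real.exp ε₀ / (Real.exp ε₀ + 1)) •
              σ.map (djwOut (djwM d L ε₀) (unitDir u x) (-1) 1) +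
            ENNReal.ofReal (1 - Real.exp ε₀ / (Real.exp ε₀ + 1)) •
              σ.map (djwOut (djwM d L ε₀) (unitDir u x) (-1) (-1))) := rfl

/-- the DJW18 randomizer satisfies `ε₀`-local differential privacy on
the `ℓ₂`-ball of radius `L`: for all `x, x'` with `‖x‖₂ ≤ L`, `‖x'‖₂ ≤ L` and every
measurable `S`, `Pr[R(x) ∈ S] ≤ e^{ε₀} · Pr[R(x') ∈ S]`. -/
theorem djw18_ldp (d : ℕ) (hd : 1 ≤ d) (L ε₀ : ℝ) (hL : 0 < L) (hε₀ : 0 < ε₀)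
    (u : EuclideanSpace ℝ (Fin d)) (hu : ‖u‖ = 1)
    (σ : Measure (EuclideanSpace ℝ (Fin d))) (hσ : IsUniformSphereMeasure σ)
    (x x' : EuclideanSpace ℝ (Fin d)) (hx : ‖x‖ ≤ L) (hx' : ‖x'‖ ≤ L) :
    ∀ S : Set (EuclideanSpace ℝ (Fin d)), MeasurableSet S →
      djw18 d L ε₀ u σ x S ≤ ENNReal.ofReal (Real.exp ε₀) * djw18 d L ε₀ u σ x' S := by
  intro S hS
  obtain ⟨hprob, hsphere, hinv⟩ := hσ
  have hneg : σ.map (fun v : EuclideanSpace ℝ (Fin d) => -v) = σ := by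
    have := hinv (LinearIsometryEquiv.neg ℝ)
    simpa using this
  set M := djwM d L ε₀ with hM
  set e := Real.exp ε₀ with he
  have he1 : 1 < e := by
    have h1 := Real.add_one_le_exp ε₀
    rw [← he] at h1; linarith
  set pU := e / (e + 1) with hpU
  have hpU0 : 0 ≤ pU := by positivity
  have hpUhalf : 1 - pU ≤ pU := by
    rw [hpU]
    have hpos : (0:ℝ) < e + 1 := by linarith
    rw [sub_le_iff_le_add, ← add_div, le_div_iff₀ hpos]
    linarith
  have h1pU0 : 0 ≤ 1 - pU := by
    rw [hpU]
    have : e / (e + 1) ≤ 1 := by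
      rw [div_le_one (by linarith)]; linarith
    linarith
  have hepU : e * (1 - pU) = pU := by
    rw [hpU]; field_simp; ring
  -- per-input quantities
  have hq' : ENNReal.ofReal (1 - pU) ≤ ENNReal.ofReal pU := ENNReal.ofReal_le_ofReal hpUhalf
  set q := ENNReal.ofReal pU with hqdef
  set q' := ENNReal.ofReal (1 - pU) with hq'def
  set C := σ ((fun v : EuclideanSpace ℝ (Fin d) => M • v) ⁻¹' S) with hC
  have key : ∀ y : EuclideanSpace ℝ (Fin d), ‖y‖ ≤ L →
      (q * σ.map (djwOut M (unitDir u y) 1 1) S + q' * σ.map (djwOut M (unitDir u y) 1 (-1)) S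
        ≥ q' * (2 * C)) ∧
      (djw18 d L ε₀ u σ y S =
        ENNReal.ofReal (1 / 2 + ‖y‖ / (2 * L)) *
          (q * σ.map (djwOut M (unitDir u y) 1 1) S +
            q' * σ.map (djwOut M (unitDir u y) 1 (-1)) S) +
        ENNReal.ofReal (1 - (1 / 2 + ‖y‖ / (2 * L))) *
          (q * σ.map (djwOut M (unitDir u y) 1 (-1)) S +
            q' * σ.map (djwOut M (unitDir u y) 1 1) S)) := by
    intro y hy
    constructor
    · have hsum := map_sum_eq σ hneg M (unitDir u y) S hS
      calc q' * (2 * C) = q' * (σ.map (djwOut M (unitDir u y) 1 1) S +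
            σ.map (djwOut M (unitDir u y) 1 (-1)) S) := by rw [hsum, hC]
        _ = q' * σ.map (djwOut M (unitDir u y) 1 1) S +
            q' * σ.map (djwOut M (unitDir u y) 1 (-1)) S := by ring
        _ ≤ q * σ.map (djwOut M (unitDir u y) 1 1) S +
            q' * σ.map (djwOut M (unitDir u y) 1 (-1)) S := by gcongr
    · rw [djw18_eq]
      rw [map_neg_swap_1 σ hneg M (unitDir u y), map_neg_swap_2 σ hneg M (unitDir u y)]
      simp only [Measure.coe_add, Measure.coe_smul, Pi.add_apply, Pi.smul_apply,
        smul_eq_mul, ← hM, ← he, ← hpU, ← hqdef, ← hq'def]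
  -- the two probability weights for x
  have hpS0 : (0:ℝ) ≤ 1 / 2 + ‖x‖ / (2 * L) := by positivity
  have hpS1 : (0:ℝ) ≤ 1 - (1 / 2 + ‖x‖ / (2 * L)) := by
    have : ‖x‖ / (2 * L) ≤ 1 / 2 := by
      rw [div_le_div_iff₀ (by linarith) (by norm_num)]; linarith
    linarith
  have hpS0' : (0:ℝ) ≤ 1 / 2 + ‖x'‖ / (2 * L) := by positivity
  have hpS1' : (0:ℝ) ≤ 1 - (1 / 2 + ‖x'‖ / (2 * L)) := by
    have : ‖x'‖ / (2 * L) ≤ 1 / 2 := by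
      rw [div_le_div_iff₀ (by linarith) (by norm_num)]; linarith
    linarith
  have hone : ENNReal.ofReal (1 / 2 + ‖x‖ / (2 * L)) +
      ENNReal.ofReal (1 - (1 / 2 + ‖x‖ / (2 * L))) = 1 := by
    rw [← ENNReal.ofReal_add hpS0 hpS1]; norm_num
  have hone' : ENNReal.ofReal (1 / 2 + ‖x'‖ / (2 * L)) +
      ENNReal.ofReal (1 - (1 / 2 + ‖x'‖ / (2 * L))) = 1 := by
    rw [← ENNReal.ofReal_add hpS0' hpS1']; norm_num
  obtain ⟨-, hx_eq⟩ := key x hx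
  obtain ⟨hx'_ge, hx'_eq⟩ := key x' hx'
  set A := σ.map (djwOut M (unitDir u x) 1 1) S
  set B := σ.map (djwOut M (unitDir u x) 1 (-1)) S
  have hsumx : A + B = 2 * C := map_sum_eq σ hneg M (unitDir u x) S hS
  -- upper bound for x
  have hup : djw18 d L ε₀ u σ x S ≤ q * (2 * C) := by
    rw [hx_eq]
    calc ENNReal.ofReal (1 / 2 + ‖x‖ / (2 * L)) * (q * A + q' * B) +
          ENNReal.ofReal (1 - (1 / 2 + ‖x‖ / (2 * L))) * (q * B + q' * A)
        ≤ ENNReal.ofReal (1 / 2 + ‖x‖ / (2 * L)) * (q * A + q * B) +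
          ENNReal.ofReal (1 - (1 / 2 + ‖x‖ / (2 * L))) * (q * B + q * A) := by gcongr
      _ = (ENNReal.ofReal (1 / 2 + ‖x‖ / (2 * L)) +
          ENNReal.ofReal (1 - (1 / 2 + ‖x‖ / (2 * L)))) * (q * (A + B)) := by ring
      _ = q * (A + B) := by rw [hone, one_mul]
      _ = q * (2 * C) := by rw [hsumx]
  -- lower bound for x'
  have hlow : q' * (2 * C) ≤ djw18 d L ε₀ u σ x' S := by
    rw [hx'_eq]
    calc q' * (2 * C)
        = (ENNReal.ofReal (1 / 2 + ‖x'‖ / (2 * L)) +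
            ENNReal.ofReal (1 - (1 / 2 + ‖x'‖ / (2 * L)))) * (q' * (2 * C)) := by
          rw [hone', one_mul]
      _ = ENNReal.ofReal (1 / 2 + ‖x'‖ / (2 * L)) * (q' * (2 * C)) +
          ENNReal.ofReal (1 - (1 / 2 + ‖x'‖ / (2 * L))) * (q' * (2 * C)) := by ring
      _ ≤ _ := by
          have hB : q' * (2 * C) ≤ q * σ.map (djwOut M (unitDir u x') 1 (-1)) S +
              q' * σ.map (djwOut M (unitDir u x') 1 1) S := by
            have hsum' := map_sum_eq σ hneg M (unitDir u x') S hS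
            calc q' * (2 * C) = q' * (σ.map (djwOut M (unitDir u x') 1 1) S +
                  σ.map (djwOut M (unitDir u x') 1 (-1)) S) := by rw [hsum', hC]
              _ = q' * σ.map (djwOut M (unitDir u x') 1 (-1)) S +
                  q' * σ.map (djwOut M (unitDir u x') 1 1) S := by ring
              _ ≤ q * σ.map (djwOut M (unitDir u x') 1 (-1)) S +
                  q' * σ.map (djwOut M (unitDir u x') 1 1) S := by gcongr
          exact add_le_add (mul_le_mul_right hx'_ge _) (mul_le_mul_right hB _)
  -- combine
  have hkeyq : ENNReal.ofReal e * q' = q := by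
    rw [hq'def, hqdef, ← ENNReal.ofReal_mul (le_of_lt (by linarith : (0:ℝ) < e)), hepU]
  calc djw18 d L ε₀ u σ x S ≤ q * (2 * C) := hup
    _ = ENNReal.ofReal e * (q' * (2 * C)) := by rw [← hkeyq]; ring
    _ ≤ ENNReal.ofReal e * djw18 d L ε₀ u σ x' S := by gcongr
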